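/- For all n > 0 and any family x₁,…,xₙ of booleans (identified with the integers 0 and 1), the disjunction satisfies the following equality of integers: 2^{n-1} · (x₁ ∨ … ∨ xₙ) = 2^{n-1} − Σ_{i=1}^{n} (−1)^{i−1} Σ_{K ∈ P(n,i)} (⊕_{k ∈ K} (1 − x_k)), where P(n,i) is the set of all subsets of {1,…,n} of size exactly i. -/

import Mathlib

/-!
Write `F` for the set of indices with `x k = false`. The parity of `K ∩ F` is `(1 - (-1)^#(K ∩ F)) / 2`,
so after collecting the inner sums into one signed sum over all subsets `K`, everything reduces to
`∑_K (-1)^#K` and `∑_K (-1)^#K (-1)^#(K ∩ F) = ∏_k (1 - (-1)^[k ∈ F])`. The first vanishes for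
`n > 0`; the second is `2^n` if every `x k` is false and `0` otherwise.
-/

open Finset

lemma two_mul_ite_odd (m : ℕ) : 2 * (if Odd m then (1 : ℤ) else 0) = 1 - (-1) ^ m := by
  rcases Nat.even_or_odd m with h | h
  · simp [h.neg_one_pow, Nat.not_odd_iff_even.mpr h]
  · simp [h.neg_one_pow, h]

lemma sum_Icc_neg_one_pow_mul_sum_powersetCard {α R : Type*} [CommRing R] (s : Finset α)
    (f : Finset α → R) (hf : f ∅ = 0) :
    ∑ i ∈ Icc 1 #s, (-1 : R) ^ (i - 1) * ∑ K ∈ s.powersetCard i, f K =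
      -∑ K ∈ s.powerset, (-1) ^ #K * f K := by
  have hIcc : Icc 1 #s = (range (#s + 1)).erase 0 := by
    ext i
    simp only [mem_Icc, mem_erase, mem_range]
    omega
  rw [← sum_neg_distrib, sum_powerset, hIcc, sum_erase _ (by simp [hf])]
  refine sum_congr rfl fun i hi => ?_
  rw [mul_sum]
  refine sum_congr rfl fun K hK => ?_
  obtain ⟨-, hKcard⟩ := mem_powersetCard.mp hK
  rcases i with _ | i
  · simp [card_eq_zero.mp hKcard, hf]
  · simp [hKcard, pow_succ]

lemma sum_powerset_neg_one_pow_card_mul_neg_one_pow_card_filter {ι R : Type*} [CommRing R]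
    (s : Finset ι) (p : ι → Prop) [DecidablePred p] :
    ∑ K ∈ s.powerset, (-1 : R) ^ #K * (-1) ^ #(K.filter p) =
      if ∀ k ∈ s, p k then 2 ^ #s else 0 := by
  have hprod : ∀ K : Finset ι, (-1 : R) ^ #K * (-1) ^ #(K.filter p) =
      ∏ k ∈ K, -(if p k then -1 else 1) := by
    intro K
    rw [← prod_const, ← prod_const, prod_filter, ← prod_mul_distrib]
    exact prod_congr rfl fun k _ => by split_ifs <;> simp
  have hfactor : ∀ k, 1 + -(if p k then -1 else 1 : R) = if p k then 2 else 0 := by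
    intro k
    split_ifs <;> norm_num
  simp only [hprod, ← prod_one_add, hfactor, prod_ite_zero, prod_const]

lemma sum_powerset_neg_one_pow_card_mul_ite_odd_card_filter {ι : Type*} {s : Finset ι}
    (hs : s.Nonempty) (p : ι → Prop) [DecidablePred p] :
    ∑ K ∈ s.powerset, (-1 : ℤ) ^ #K * (if Odd #(K.filter p) then 1 else 0) =
      -(if ∀ k ∈ s, p k then 2 ^ (#s - 1) else 0) := by
  apply mul_left_cancel₀ (two_ne_zero (α := ℤ))
  calc 2 * ∑ K ∈ s.powerset, (-1 : ℤ) ^ #K * (if Odd #(K.filter p) then 1 else 0)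
      = ∑ K ∈ s.powerset, (-1 : ℤ) ^ #K - ∑ K ∈ s.powerset, (-1) ^ #K * (-1) ^ #(K.filter p) := by
        rw [mul_sum, ← sum_sub_distrib]
        refine sum_congr rfl fun K _ => ?_
        rw [mul_left_comm, two_mul_ite_odd]
        ring
    _ = -(if ∀ k ∈ s, p k then 2 ^ #s else 0) := by
        rw [sum_powerset_neg_one_pow_card_of_nonempty hs,
          sum_powerset_neg_one_pow_card_mul_neg_one_pow_card_filter, zero_sub]
    _ = 2 * -(if ∀ k ∈ s, p k then 2 ^ (#s - 1) else 0) := by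
        obtain ⟨m, hm⟩ := Nat.exists_eq_add_one_of_ne_zero hs.card_pos.ne'
        rw [hm, Nat.add_sub_cancel, pow_succ']
        split_ifs <;> ring

/-- For all `n > 0` and any family of booleans `x : Fin n → Bool`
(identified with the integers 0 and 1), the disjunction satisfies
`2^(n-1) · (x₁ ∨ … ∨ xₙ) = 2^(n-1) − Σ_{i=1}^n (−1)^(i−1) Σ_{K ∈ P(n,i)} (⊕_{k∈K} (1 − x k))`,
where `P(n,i)` is the collection of subsets of `{1,…,n}` of cardinality `i`, and each
parity of negations `⊕_{k∈K} (1 − x k)` is identified with an integer in `{0,1}`. -/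
theorem disjunction_fourier (n : ℕ) (hn : 0 < n) (x : Fin n → Bool) :
    (2 : ℤ) ^ (n - 1) * (if ∃ k : Fin n, x k = true then (1 : ℤ) else 0) =
      (2 : ℤ) ^ (n - 1) -
        ∑ i ∈ Finset.Icc 1 n, (-1 : ℤ) ^ (i - 1) *
          ∑ K ∈ (Finset.univ : Finset (Fin n)).powersetCard i,
            (if Odd (K.filter (fun k => x k = false)).card then (1 : ℤ) else 0) := by
  have hsum := sum_Icc_neg_one_pow_mul_sum_powersetCard (univ : Finset (Fin n))
    (fun K => if Odd (K.filter (fun k => x k = false)).card then (1 : ℤ) else 0) (by simp)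
  have hne : (univ : Finset (Fin n)).Nonempty := univ_nonempty_iff.mpr ⟨⟨0, hn⟩⟩
  rw [sum_powerset_neg_one_pow_card_mul_ite_odd_card_filter hne, card_univ,
    Fintype.card_fin] at hsum
  rw [hsum]
  by_cases h : ∃ k, x k = true
  · have hall : ¬∀ k, x k = false := fun hall => by
      obtain ⟨k, hk⟩ := h
      simp [hall k] at hk
    simp [h, hall]
  · have hall : ∀ k, x k = false := by simpa using h
    simp [hall]
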